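/- arXiv:1711.05776 — 4 statements merged into one kernel-verified Lean document; each statement's English description precedes it below -/
import Mathlib

section
/- Let k be an algebraically closed field of characteristic different from 3 and let f be a nonzero binary quartic form over k. Then S(f) = 0 and T(f) = 0 if and only if f has a root of multiplicity at least 3, i.e. f = L³·M for some binary linear forms L, M over k with L ≠ 0. -/
open MvPolynomial

noncomputable section

/-- The classical invariant `S` of a binary quartic form with coefficients `f 0, …, f 4`. -/
def Sinv {R : Type*} [CommRing R] (f : Fin 5 → R) : R :=
  12 * f 0 * f 4 - 3 * f 1 * f 3 + f 2 ^ 2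

/-- The classical invariant `T` of a binary quartic form with coefficients `f 0, …, f 4`. -/
def Tinv {R : Type*} [CommRing R] (f : Fin 5 → R) : R :=
  72 * f 0 * f 2 * f 4 - 27 * f 0 * f 3 ^ 2 - 27 * f 1 ^ 2 * f 4
    + 9 * f 1 * f 2 * f 3 - 2 * f 2 ^ 3

/-- The binary quartic form `f₀ y⁴ + f₁ y³z + f₂ y²z² + f₃ yz³ + f₄ z⁴`. -/
def binQuartic {R : Type*} [CommRing R] (f : Fin 5 → R) : MvPolynomial (Fin 2) R :=
  ∑ i : Fin 5, C (f i) * X 0 ^ (4 - (i : ℕ)) * X 1 ^ (i : ℕ)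

/-- The `i`-th coefficient of a binary quartic form: coefficient of `y^(4-i) z^i`. -/
def binCoeff {R : Type*} [CommRing R] (g : MvPolynomial (Fin 2) R) (i : Fin 5) : R :=
  coeff (Finsupp.single 0 (4 - (i : ℕ)) + Finsupp.single 1 (i : ℕ)) g

/-- The substitution `g(y,z) = q(-v·y - w·z, u·y, u·z)`, a binary quartic form in `y, z` with
coefficients in `R[u,v,w]`. -/
def gsub {R : Type*} [CommRing R] (q : MvPolynomial (Fin 3) R) :
    MvPolynomial (Fin 2) (MvPolynomial (Fin 3) R) :=
  aeval
    (![(C (- X 1) * X 0 - C (X 2) * X 1 : MvPolynomial (Fin 2) (MvPolynomial (Fin 3) R)),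
       C (X 0) * X 0, C (X 0) * X 1]) q

/-- `u⁴ · H(q)`, the invariant `S` of `g(y,z) = q(-vy-wz, uy, uz)`; the harmonic quartic `H(q)`
is the form determined by `u⁴ · H(q) = SG q`. -/
def SG {R : Type*} [CommRing R] (q : MvPolynomial (Fin 3) R) : MvPolynomial (Fin 3) R :=
  Sinv (fun i => binCoeff (gsub q) i)

/-- `u⁶ · K(q)`, the invariant `T` of `g(y,z) = q(-vy-wz, uy, uz)`; the harmonic sextic `K(q)`
is the form determined by `u⁶ · K(q) = TG q`. -/
def TG {R : Type*} [CommRing R] (q : MvPolynomial (Fin 3) R) : MvPolynomial (Fin 3) R :=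
  Tinv (fun i => binCoeff (gsub q) i)

/-- dot product of two vectors in `R³`. -/
def dot3 {R : Type*} [CommRing R] (d a : Fin 3 → R) : R :=
  d 0 * a 0 + d 1 * a 1 + d 2 * a 2

/-- restriction of a ternary form to the parameterized line `(y,z) ↦ y·a + z·b`. -/
def restrictLine {R : Type*} [CommRing R] (q : MvPolynomial (Fin 3) R) (a b : Fin 3 → R) :
    MvPolynomial (Fin 2) R :=
  aeval (fun i => C (a i) * X 0 + C (b i) * X 1) q

/-- A binary quartic form vanishes identically or has a root of multiplicity at least `3`:
`f = L³·M` with `L ≠ 0` linear and `M` linear (possibly zero). -/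
def HasTripleRoot {R : Type*} [CommRing R] (f : MvPolynomial (Fin 2) R) : Prop :=
  ∃ L M : MvPolynomial (Fin 2) R,
    L.IsHomogeneous 1 ∧ M.IsHomogeneous 1 ∧ L ≠ 0 ∧ f = L ^ 3 * M

/-- The line with dual coordinates `d` is an inflection line of the quartic `{q = 0}`. -/
def IsInflectionLine {k : Type*} [Field k] (q : MvPolynomial (Fin 3) k) (d : Fin 3 → k) :
    Prop :=
  d ≠ 0 ∧ ∃ a b : Fin 3 → k, LinearIndependent k ![a, b] ∧
    dot3 d a = 0 ∧ dot3 d b = 0 ∧ HasTripleRoot (restrictLine q a b)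

/-- The line with dual coordinates `d` is a simple inflection line of `{q = 0}` with
inflection point `p`. -/
def IsSimpleInflectionLineAt {k : Type*} [Field k] (q : MvPolynomial (Fin 3) k)
    (d p : Fin 3 → k) : Prop :=
  d ≠ 0 ∧ ∃ (a b : Fin 3 → k) (s t : k), LinearIndependent k ![a, b] ∧
    dot3 d a = 0 ∧ dot3 d b = 0 ∧ (s, t) ≠ (0, 0) ∧
    (∀ i, p i = s * a i + t * b i) ∧
    eval p q = 0 ∧ (∃ i, eval p (pderiv i q) ≠ 0) ∧
    ∃ L M : MvPolynomial (Fin 2) k, L.IsHomogeneous 1 ∧ M.IsHomogeneous 1 ∧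
      LinearIndependent k ![L, M] ∧
      restrictLine q a b = L ^ 3 * M ∧ eval ![s, t] L = 0

/-- The line with dual coordinates `d` is a hyperinflection line of `{q = 0}` with
hyperinflection point `p`. -/
def IsHyperinflectionLineAt {k : Type*} [Field k] (q : MvPolynomial (Fin 3) k)
    (d p : Fin 3 → k) : Prop :=
  d ≠ 0 ∧ ∃ (a b : Fin 3 → k) (s t : k), LinearIndependent k ![a, b] ∧
    dot3 d a = 0 ∧ dot3 d b = 0 ∧ (s, t) ≠ (0, 0) ∧
    (∀ i, p i = s * a i + t * b i) ∧
    eval p q = 0 ∧ (∃ i, eval p (pderiv i q) ≠ 0) ∧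
    ∃ (c : k) (L : MvPolynomial (Fin 2) k), c ≠ 0 ∧ L.IsHomogeneous 1 ∧ L ≠ 0 ∧
      restrictLine q a b = C c * L ^ 4 ∧ eval ![s, t] L = 0

/-- The pairing `⟨·,·⟩` between quartic forms in `x,y,z` and quartic forms in `u,v,w`:
`⟨x^i y^j z^k, u^i v^j w^k⟩ = i!j!k!/2`. -/
def pairQ {R : Type*} [CommRing R] (q h : MvPolynomial (Fin 3) R) : R :=
  ∑ m ∈ q.support,
    (((m 0).factorial * (m 1).factorial * (m 2).factorial / 2 : ℕ) : R)
      * coeff m q * coeff m h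

/-- The action of `Σ c_{ξη} ξ ∂_η ∈ 𝔤𝔩₃(R)` on polynomials. -/
def lieAct {R : Type*} [CommRing R] (c : Fin 3 → Fin 3 → R)
    (q : MvPolynomial (Fin 3) R) : MvPolynomial (Fin 3) R :=
  ∑ ξ : Fin 3, ∑ η : Fin 3, C (c ξ η) * (X ξ * pderiv η q)

/-- substitution of variables by the linear change of coordinates `M`: `q(M·(x,y,z)ᵗ)`. -/
def substM {R : Type*} [CommRing R] (M : Matrix (Fin 3) (Fin 3) R)
    (q : MvPolynomial (Fin 3) R) : MvPolynomial (Fin 3) R :=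
  aeval (fun i => ∑ j : Fin 3, C (M i j) * X j) q

/-- The quartic form `q_ε = (x−y)⁴ + (x−z)⁴ + (y−εz)⁴ − (x⁴ + y⁴ + z⁴)`. -/
def qeps {k : Type*} [CommRing k] (ε : k) : MvPolynomial (Fin 3) k :=
  (X 0 - X 1) ^ 4 + (X 0 - X 2) ^ 4 + (X 1 - C ε * X 2) ^ 4
    - (X 0 ^ 4 + X 1 ^ 4 + X 2 ^ 4)

/-!
Over an algebraically closed field a binary quartic splits into four linear forms
`bᵢ y - aᵢ z`. With the minors `dᵢⱼ = aᵢ bⱼ - aⱼ bᵢ` and `P = d₀₁ d₂₃`, `Q = d₀₂ d₁₃`,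
`R = d₀₃ d₁₂`, the Plücker relation reads `Q = P + R`, and
`S = P² + PR + R²`, `T = (P - R)(2P + R)(P + 2R)`.
When `3 ≠ 0`, `S = T = 0` forces `P = R = 0`, so `P = Q = 0`; each of these products having a
vanishing factor, three of the four linear forms are proportional. Conversely a cubed factor
makes `d₀₁` and `d₁₂` vanish, hence `P = R = 0` and `S = T = 0`.
-/

section LinearForms

variable {R : Type*} [CommRing R]

/-- The linear form vanishing at the point `(a : b)`. -/
def linForm (a b : R) : MvPolynomial (Fin 2) R :=
  C b * X 0 - C a * X 1

theorem isHomogeneous_linForm (a b : R) : (linForm a b).IsHomogeneous 1 :=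
  (isHomogeneous_C_mul_X b 0).sub (isHomogeneous_C_mul_X a 1)

theorem exists_eq_linForm_of_isHomogeneous_one {L : MvPolynomial (Fin 2) R}
    (hL : L.IsHomogeneous 1) : ∃ a b, L = linForm a b := by
  have hL : L ∈ homogeneousSubmodule (Fin 2) R 1 := hL
  rw [homogeneousSubmodule_one_eq_span_X, Submodule.mem_span_range_iff_exists_fun] at hL
  obtain ⟨c, rfl⟩ := hL
  exact ⟨-c 1, c 0, by simp [linForm, Fin.sum_univ_two, smul_eq_C_mul]⟩

theorem linForm_mul_mul (μ a b : R) : linForm (μ * a) (μ * b) = C μ * linForm a b := by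
  simp only [linForm, map_mul]
  ring

end LinearForms

section Proportional

variable {k : Type*} [Field k]

theorem exists_eq_mul_of_mul_eq_mul {a b a' b' : k} (hab : ¬(a = 0 ∧ b = 0))
    (h : a * b' = a' * b) : ∃ μ, a' = μ * a ∧ b' = μ * b := by
  by_cases ha : a = 0
  · have hb : b ≠ 0 := fun hb => hab ⟨ha, hb⟩
    have ha' : a' = 0 := (mul_eq_zero.mp (by rw [← h, ha, zero_mul])).resolve_right hb
    exact ⟨b' / b, by rw [ha, ha', mul_zero], (div_mul_cancel₀ b' hb).symm⟩
  · refine ⟨a' / a, (div_mul_cancel₀ a' ha).symm, ?_⟩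
    field_simp
    linear_combination h

theorem exists_linForm_eq_C_mul {a b a' b' : k} (h : linForm a b ≠ 0) (hd : a * b' = a' * b) :
    ∃ μ, linForm a' b' = C μ * linForm a b := by
  obtain ⟨μ, rfl, rfl⟩ :=
    exists_eq_mul_of_mul_eq_mul (fun ⟨ha, hb⟩ => h (by simp [linForm, ha, hb])) hd
  exact ⟨μ, linForm_mul_mul μ a b⟩

end Proportional

section ProductsOfLinearForms

variable {R : Type*} [CommRing R]

def linProd (a b : Fin 4 → R) : MvPolynomial (Fin 2) R :=
  ∏ i, linForm (a i) (b i)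

def linProdCoeffs (a b : Fin 4 → R) : Fin 5 → R :=
  ![b 0 * b 1 * b 2 * b 3,
    -(a 0 * b 1 * b 2 * b 3 + b 0 * a 1 * b 2 * b 3 + b 0 * b 1 * a 2 * b 3
      + b 0 * b 1 * b 2 * a 3),
    a 0 * a 1 * b 2 * b 3 + a 0 * b 1 * a 2 * b 3 + a 0 * b 1 * b 2 * a 3 + b 0 * a 1 * a 2 * b 3
      + b 0 * a 1 * b 2 * a 3 + b 0 * b 1 * a 2 * a 3,
    -(a 0 * a 1 * a 2 * b 3 + a 0 * a 1 * b 2 * a 3 + a 0 * b 1 * a 2 * a 3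
      + b 0 * a 1 * a 2 * a 3),
    a 0 * a 1 * a 2 * a 3]

theorem binQuartic_linProdCoeffs (a b : Fin 4 → R) :
    binQuartic (linProdCoeffs a b) = linProd a b := by
  simp [binQuartic, linProdCoeffs, linProd, linForm, Fin.sum_univ_five, Fin.prod_univ_four]
  ring

theorem binCoeff_binQuartic (f : Fin 5 → R) (i : Fin 5) : binCoeff (binQuartic f) i = f i := by
  simp only [binCoeff, binQuartic, X_pow_eq_monomial, C_mul_monomial, monomial_mul, coeff_sum,
    coeff_monomial, mul_one]
  rw [Finset.sum_eq_single i
    (fun j _ hj => if_neg fun h => hj (Fin.ext (by simpa using congr($h 1)))) (by simp), if_pos rfl]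

theorem binQuartic_injective : Function.Injective (binQuartic (R := R)) := fun f g h =>
  funext fun i => by rw [← binCoeff_binQuartic f, h, binCoeff_binQuartic]

def minor (a b : Fin 4 → R) (i j : Fin 4) : R :=
  a i * b j - a j * b i

theorem minor_swap (a b : Fin 4 → R) (i j : Fin 4) : minor a b j i = -minor a b i j := by
  simp only [minor]
  ring

theorem minor_pluecker (a b : Fin 4 → R) :
    minor a b 0 2 * minor a b 1 3 = minor a b 0 1 * minor a b 2 3 + minor a b 0 3 * minor a b 1 2 := by
  simp only [minor]
  ring

theorem Sinv_linProdCoeffs (a b : Fin 4 → R) :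
    Sinv (linProdCoeffs a b) =
      (minor a b 0 1 * minor a b 2 3) ^ 2
        + minor a b 0 1 * minor a b 2 3 * (minor a b 0 3 * minor a b 1 2)
        + (minor a b 0 3 * minor a b 1 2) ^ 2 := by
  simp only [Sinv, linProdCoeffs, minor, Matrix.cons_val_zero, Matrix.cons_val_one,
    Matrix.head_cons, Matrix.cons_val_two, Matrix.tail_cons, Matrix.cons_val_three,
    Matrix.cons_val_four]
  ring

theorem Tinv_linProdCoeffs (a b : Fin 4 → R) :
    Tinv (linProdCoeffs a b) =
      (minor a b 0 1 * minor a b 2 3 - minor a b 0 3 * minor a b 1 2)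
        * (2 * (minor a b 0 1 * minor a b 2 3) + minor a b 0 3 * minor a b 1 2)
        * (minor a b 0 1 * minor a b 2 3 + 2 * (minor a b 0 3 * minor a b 1 2)) := by
  simp only [Tinv, linProdCoeffs, minor, Matrix.cons_val_zero, Matrix.cons_val_one,
    Matrix.head_cons, Matrix.cons_val_two, Matrix.tail_cons, Matrix.cons_val_three,
    Matrix.cons_val_four]
  ring

end ProductsOfLinearForms

theorem eq_zero_of_sq_add_mul_add_sq_eq_zero {k : Type*} [Field k] {x z : k} (h3 : (3 : k) ≠ 0)
    (hS : x ^ 2 + x * z + z ^ 2 = 0) (hT : (x - z) * (2 * x + z) * (x + 2 * z) = 0) :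
    x = 0 ∧ z = 0 := by
  have of_three_mul_sq : ∀ y : k, 3 * y ^ 2 = 0 → y = 0 := fun y hy =>
    pow_eq_zero_iff two_ne_zero |>.mp ((mul_eq_zero.mp hy).resolve_left h3)
  rcases mul_eq_zero.mp hT with hT | h
  · rcases mul_eq_zero.mp hT with h | h
    · have hx := of_three_mul_sq x (by linear_combination hS + (2 * x + z) * h)
      exact ⟨hx, by linear_combination hx - h⟩
    · have hx := of_three_mul_sq x (by linear_combination hS + (x - z) * h)
      exact ⟨hx, by linear_combination h - 2 * hx⟩
  · have hz := of_three_mul_sq z (by linear_combination hS - (x - z) * h)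
    exact ⟨by linear_combination h - 2 * hz, hz⟩

section TripleRoots

variable {R : Type*} [CommRing R]

theorem hasTripleRoot_zero [Nontrivial R] : HasTripleRoot (0 : MvPolynomial (Fin 2) R) :=
  ⟨X 0, 0, isHomogeneous_X R 0, isHomogeneous_zero _ R 1, X_ne_zero 0, by rw [mul_zero]⟩

theorem hasTripleRoot_of_eq {f L N : MvPolynomial (Fin 2) R} (c : R) (hL : L.IsHomogeneous 1)
    (hL0 : L ≠ 0) (hN : N.IsHomogeneous 1) (h : f = C c * L ^ 3 * N) : HasTripleRoot f :=
  ⟨L, C c * N, hL, by simpa using hN.C_mul c, hL0, by rw [h]; ring⟩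

theorem hasTripleRoot_linProd {k : Type*} [Field k] (a b : Fin 4 → k)
    (hP : minor a b 0 1 * minor a b 2 3 = 0) (hQ : minor a b 0 2 * minor a b 1 3 = 0) :
    HasTripleRoot (linProd a b) := by
  by_cases h0 : linProd a b = 0
  · rw [h0]
    exact hasTripleRoot_zero
  have hL0 (i : Fin 4) : linForm (a i) (b i) ≠ 0 :=
    fun hi => h0 (Finset.prod_eq_zero (Finset.mem_univ i) hi)
  have hL (i : Fin 4) := isHomogeneous_linForm (a i) (b i)
  have proportional (i j : Fin 4) (h : minor a b i j = 0) :
      ∃ μ, linForm (a j) (b j) = C μ * linForm (a i) (b i) :=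
    exists_linForm_eq_C_mul (hL0 i) (sub_eq_zero.mp h)
  rw [linProd, Fin.prod_univ_four]
  rcases mul_eq_zero.mp hP with h01 | h23 <;> rcases mul_eq_zero.mp hQ with h02 | h13
  · obtain ⟨μ, h1⟩ := proportional 0 1 h01
    obtain ⟨ν, h2⟩ := proportional 0 2 h02
    exact hasTripleRoot_of_eq (μ * ν) (hL 0) (hL0 0) (hL 3) (by rw [h1, h2, map_mul]; ring)
  · obtain ⟨μ, h1⟩ := proportional 0 1 h01
    obtain ⟨ν, h3⟩ := proportional 1 3 h13
    exact hasTripleRoot_of_eq (μ ^ 2 * ν) (hL 0) (hL0 0) (hL 2)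
      (by rw [h3, h1, map_mul, map_pow]; ring)
  · obtain ⟨ν, h2⟩ := proportional 0 2 h02
    obtain ⟨μ, h3⟩ := proportional 2 3 h23
    exact hasTripleRoot_of_eq (ν ^ 2 * μ) (hL 0) (hL0 0) (hL 1)
      (by rw [h3, h2, map_mul, map_pow]; ring)
  · obtain ⟨μ, h1⟩ := proportional 3 1 (by rw [minor_swap, h13, neg_zero])
    obtain ⟨ν, h2⟩ := proportional 3 2 (by rw [minor_swap, h23, neg_zero])
    exact hasTripleRoot_of_eq (μ * ν) (hL 3) (hL0 3) (hL 0) (by rw [h1, h2, map_mul]; ring)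

end TripleRoots

section Splitting

variable {k : Type*} [Field k] [IsAlgClosed k]

theorem exists_eval_eq_zero_of_degree_eq {p : Polynomial k} {n : ℕ} (hp : p.degree = n)
    (hn : n ≠ 0) : ∃ r, p.eval r = 0 :=
  IsAlgClosed.exists_root p (by rw [hp]; exact_mod_cast hn)

-- Either the leading coefficient vanishes and `z` is a factor, or `y - r z` is one for a root `r`
-- of the dehomogenized form, the cofactor being given by Horner's scheme.
theorem exists_linear_factor_quartic (f₀ f₁ f₂ f₃ f₄ : k) :
    ∃ a b c₀ c₁ c₂ c₃ : k, f₀ = b * c₀ ∧ f₁ = b * c₁ - a * c₀ ∧ f₂ = b * c₂ - a * c₁ ∧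
      f₃ = b * c₃ - a * c₂ ∧ f₄ = -(a * c₃) := by
  by_cases h : f₀ = 0
  · exact ⟨-1, 0, f₁, f₂, f₃, f₄, by simp [h], by ring, by ring, by ring, by ring⟩
  obtain ⟨r, hr⟩ := exists_eval_eq_zero_of_degree_eq (n := 4)
    (p := .C f₀ * .X ^ 4 + .C f₁ * .X ^ 3 + .C f₂ * .X ^ 2 + .C f₃ * .X + .C f₄)
    (by compute_degree!) four_ne_zero
  simp only [Polynomial.eval_add, Polynomial.eval_mul, Polynomial.eval_C, Polynomial.eval_pow,
    Polynomial.eval_X] at hr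
  exact ⟨r, 1, f₀, f₁ + r * f₀, f₂ + r * (f₁ + r * f₀), f₃ + r * (f₂ + r * (f₁ + r * f₀)),
    by ring, by ring, by ring, by ring, by linear_combination hr⟩


theorem exists_linear_factor_cubic (c₀ c₁ c₂ c₃ : k) :
    ∃ a b q₀ q₁ q₂ : k, c₀ = b * q₀ ∧ c₁ = b * q₁ - a * q₀ ∧ c₂ = b * q₂ - a * q₁ ∧
      c₃ = -(a * q₂) := by
  by_cases h : c₀ = 0
  · exact ⟨-1, 0, c₁, c₂, c₃, by simp [h], by ring, by ring, by ring⟩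
  obtain ⟨r, hr⟩ := exists_eval_eq_zero_of_degree_eq (n := 3)
    (p := .C c₀ * .X ^ 3 + .C c₁ * .X ^ 2 + .C c₂ * .X + .C c₃) (by compute_degree!)
    three_ne_zero
  simp only [Polynomial.eval_add, Polynomial.eval_mul, Polynomial.eval_C, Polynomial.eval_pow,
    Polynomial.eval_X] at hr
  exact ⟨r, 1, c₀, c₁ + r * c₀, c₂ + r * (c₁ + r * c₀), by ring, by ring, by ring,
    by linear_combination hr⟩

theorem exists_linear_factors_quadratic (q₀ q₁ q₂ : k) :
    ∃ a b a' b' : k, q₀ = b * b' ∧ q₁ = -(a * b' + a' * b) ∧ q₂ = a * a' := by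
  by_cases h : q₀ = 0
  · exact ⟨-1, 0, -q₂, q₁, by simp [h], by ring, by ring⟩
  obtain ⟨r, hr⟩ := exists_eval_eq_zero_of_degree_eq (n := 2)
    (p := .C q₀ * .X ^ 2 + .C q₁ * .X + .C q₂) (by compute_degree!) two_ne_zero
  simp only [Polynomial.eval_add, Polynomial.eval_mul, Polynomial.eval_C, Polynomial.eval_pow,
    Polynomial.eval_X] at hr
  exact ⟨r, 1, -q₁ - r * q₀, q₀, by ring, by ring, by linear_combination hr⟩

theorem exists_eq_linProdCoeffs (f : Fin 5 → k) : ∃ a b : Fin 4 → k, f = linProdCoeffs a b := by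
  obtain ⟨a₀, b₀, c₀, c₁, c₂, c₃, e₀, e₁, e₂, e₃, e₄⟩ :=
    exists_linear_factor_quartic (f 0) (f 1) (f 2) (f 3) (f 4)
  obtain ⟨a₁, b₁, q₀, q₁, q₂, rfl, rfl, rfl, rfl⟩ := exists_linear_factor_cubic c₀ c₁ c₂ c₃
  obtain ⟨a₂, b₂, a₃, b₃, rfl, rfl, rfl⟩ := exists_linear_factors_quadratic q₀ q₁ q₂
  refine ⟨![a₀, a₁, a₂, a₃], ![b₀, b₁, b₂, b₃], funext fun i => ?_⟩
  fin_cases i <;> simp [linProdCoeffs, e₀, e₁, e₂, e₃, e₄] <;> ring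

theorem hasTripleRoot_binQuartic_of_Sinv_of_Tinv (h3 : (3 : k) ≠ 0) {f : Fin 5 → k}
    (hS : Sinv f = 0) (hT : Tinv f = 0) : HasTripleRoot (binQuartic f) := by
  obtain ⟨a, b, rfl⟩ := exists_eq_linProdCoeffs f
  rw [Sinv_linProdCoeffs] at hS
  rw [Tinv_linProdCoeffs] at hT
  obtain ⟨hP, hR⟩ := eq_zero_of_sq_add_mul_add_sq_eq_zero h3 hS hT
  rw [binQuartic_linProdCoeffs]
  exact hasTripleRoot_linProd a b hP (by rw [minor_pluecker, hP, hR, add_zero])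

end Splitting

theorem Sinv_eq_zero_and_Tinv_eq_zero_of_hasTripleRoot {R : Type*} [CommRing R] {f : Fin 5 → R}
    (h : HasTripleRoot (binQuartic f)) : Sinv f = 0 ∧ Tinv f = 0 := by
  obtain ⟨L, M, hL, hM, -, hf⟩ := h
  obtain ⟨a, b, rfl⟩ := exists_eq_linForm_of_isHomogeneous_one hL
  obtain ⟨c, d, rfl⟩ := exists_eq_linForm_of_isHomogeneous_one hM
  obtain rfl : f = linProdCoeffs ![a, a, a, c] ![b, b, b, d] := binQuartic_injective <| by
    rw [hf, binQuartic_linProdCoeffs, linProd, Fin.prod_univ_four]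
    simp only [Matrix.cons_val_zero, Matrix.cons_val_one, Matrix.cons_val_two,
      Matrix.cons_val_three, Matrix.head_cons, Matrix.tail_cons]
    ring
  rw [Sinv_linProdCoeffs, Tinv_linProdCoeffs]
  simp [minor]

theorem stmt0_general {k : Type*} [Field k] [IsAlgClosed k] (h3 : (3 : k) ≠ 0)
    (f : Fin 5 → k) :
    (Sinv f = 0 ∧ Tinv f = 0) ↔
      ∃ L M : MvPolynomial (Fin 2) k, L.IsHomogeneous 1 ∧ M.IsHomogeneous 1 ∧
        L ≠ 0 ∧ binQuartic f = L ^ 3 * M :=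
  ⟨fun h => hasTripleRoot_binQuartic_of_Sinv_of_Tinv h3 h.1 h.2,
    Sinv_eq_zero_and_Tinv_eq_zero_of_hasTripleRoot⟩

/-- Over an algebraically closed field of characteristic different from `3`,
a nonzero binary quartic form `f` satisfies `S(f) = 0` and `T(f) = 0` if and only if
`f = L³·M` for some linear forms `L ≠ 0` and `M`, i.e. `f` has a root of
multiplicity at least `3`. -/
theorem stmt0 {k : Type*} [Field k] [IsAlgClosed k] (h3 : (3 : k) ≠ 0)
    (f : Fin 5 → k) (hf : binQuartic f ≠ 0) :
    (Sinv f = 0 ∧ Tinv f = 0) ↔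
      ∃ L M : MvPolynomial (Fin 2) k, L.IsHomogeneous 1 ∧ M.IsHomogeneous 1 ∧
        L ≠ 0 ∧ binQuartic f = L ^ 3 * M :=
  stmt0_general h3 f
end
end

section
/- Let R be a commutative ring and define, for ternary quartic forms q₁, q₂, q₃ over R, the trilinear form t(q₁,q₂,q₃) = ⟨q₁, H(q₂+q₃) − H(q₂) − H(q₃)⟩. Then t is symmetric in its three arguments: t(q₁,q₂,q₃) = t(q_{σ(1)}, q_{σ(2)}, q_{σ(3)}) for every permutation σ of {1,2,3}. -/
/-!
Restricting a ternary quartic `q` to the line `ux + vy + wz = 0`, via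
`g(y, z) = q(−vy − wz, uy, uz)`, is linear in `q`, so `q ↦ S(g)` is a quadratic form with a
bilinear polarization, and by the binomial theorem each monomial `xᵗ` gives a binary quartic whose
five coefficients are single monomials in `u, v, w`. Dividing by `u⁴`,
`t(q₁, q₂, q₃) = ∑ κ(m, t, s) (q₁)ₘ (q₂)ₜ (q₃)ₛ` for an explicit integer tensor `κ` on the fifteen
exponents of ternary quartic monomials. The form is symmetric in `q₂, q₃` by construction,
`κ(m, t, s) = κ(t, m, s)` is checked by evaluating `κ` on all `15³` triples, and the
transpositions `(1 2)` and `(2 3)` generate `S₃`.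
-/

open MvPolynomial

noncomputable section

open Finset

theorem Equiv.Perm.apply_eq_apply_one_of_mul_swap {n : ℕ} {M : Type*}
    (f : Equiv.Perm (Fin (n + 1)) → M)
    (hf : ∀ σ (i : Fin n), f (σ * Equiv.swap i.castSucc i.succ) = f σ)
    (σ : Equiv.Perm (Fin (n + 1))) : f σ = f 1 :=
  Submonoid.induction_of_closure_eq_top_right (Equiv.Perm.mclosure_swap_castSucc_succ n) σ rfl
    (by rintro τ _ ⟨i, rfl⟩ h; rw [hf, h])

theorem MvPolynomial.IsHomogeneous.sum_eq_of_mem_support {σ S : Type*} [Fintype σ]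
    [CommSemiring S] {q : MvPolynomial σ S} {n : ℕ} (hq : q.IsHomogeneous n) {t : σ →₀ ℕ}
    (ht : t ∈ q.support) : ∑ i, t i = n := by
  rw [← Finsupp.degree_eq_sum, Finsupp.degree_eq_weight_one]
  exact hq (mem_support_iff.mp ht)

theorem monomial_fin_three {S : Type*} [CommSemiring S] (t : Fin 3 →₀ ℕ) (r : S) :
    monomial t r = C r * X 0 ^ t 0 * X 1 ^ t 1 * X 2 ^ t 2 := by
  rw [monomial_eq, Finsupp.prod_fintype _ _ (fun _ => pow_zero _), Fin.prod_univ_three, mul_assoc,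
    mul_assoc, mul_assoc]

theorem coeff_C_mul_X_pow_mul_X_pow {S : Type*} [CommSemiring S] (p : S) (a b c d : ℕ) :
    coeff (Finsupp.single 0 a + Finsupp.single 1 b)
        (C p * X 0 ^ c * X 1 ^ d : MvPolynomial (Fin 2) S) =
      if c = a ∧ d = b then p else 0 := by
  rw [mul_assoc, X_pow_eq_monomial, X_pow_eq_monomial, monomial_mul, one_mul, C_mul_monomial,
    mul_one, coeff_monomial]
  simp only [Finsupp.ext_iff, Fin.forall_fin_two, Finsupp.add_apply, Finsupp.single_apply]
  simp

theorem equivFunOnFinite_symm_add_eq_single_add_iff (a b : Fin 3 → ℕ) (m : Fin 3 →₀ ℕ) :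
    Finsupp.equivFunOnFinite.symm a + Finsupp.equivFunOnFinite.symm b =
        Finsupp.single 0 4 + m ↔
      a + b = ![4, 0, 0] + ⇑m := by
  rw [← DFunLike.coe_fn_eq, Finsupp.coe_add, Finsupp.coe_add, Finsupp.coe_equivFunOnFinite_symm,
    Finsupp.coe_equivFunOnFinite_symm]
  suffices h : ⇑(Finsupp.single (0 : Fin 3) 4) = ![4, 0, 0] by rw [h]
  ext j
  fin_cases j <;> simp

section HarmonicQuartic

variable {R : Type*} [CommRing R]

def sinvPolarWeight : Fin 5 → ℤ := ![12, -3, 2, -3, 12]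

theorem Sinv_add_sub_sub (f g : Fin 5 → R) :
    Sinv (f + g) - Sinv f - Sinv g = ∑ i, (sinvPolarWeight i : R) * f i * g i.rev := by
  simp only [Sinv, sinvPolarWeight, Pi.add_apply, Fin.sum_univ_five, Fin.rev_zero, Fin.reduceRev,
    Fin.reduceLast, Matrix.cons_val, Matrix.cons_val_zero, Matrix.cons_val_one, Int.cast_ofNat,
    Int.cast_neg]
  ring

theorem gsub_add (q q' : MvPolynomial (Fin 3) R) : gsub (q + q') = gsub q + gsub q' :=
  map_add _ _ _

theorem gsub_C_mul (r : R) (q : MvPolynomial (Fin 3) R) : gsub (C r * q) = C (C r) * gsub q := by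
  rw [gsub, map_mul, aeval_C]
  rfl

theorem binCoeff_gsub_eq_sum (q : MvPolynomial (Fin 3) R) (i : Fin 5) :
    binCoeff (gsub q) i = ∑ t ∈ q.support, C (coeff t q) * binCoeff (gsub (monomial t 1)) i := by
  conv_lhs => rw [q.as_sum]
  rw [binCoeff, gsub, map_sum, coeff_sum]
  refine sum_congr rfl fun t _ => ?_
  rw [← mul_one (coeff t q), ← C_mul_monomial, ← gsub, gsub_C_mul, mul_one, binCoeff, coeff_C_mul]

theorem SG_add_sub_sub (q q' : MvPolynomial (Fin 3) R) :
    SG (q + q') - SG q - SG q' = ∑ i, (sinvPolarWeight i : MvPolynomial (Fin 3) R) *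
      binCoeff (gsub q) i * binCoeff (gsub q') i.rev := by
  have : (fun i => binCoeff (gsub (q + q')) i) =
      (fun i => binCoeff (gsub q) i) + fun i => binCoeff (gsub q') i := by
    ext1 i
    simp only [gsub_add, binCoeff, coeff_add, Pi.add_apply]
  rw [SG, SG, SG, this, Sinv_add_sub_sub]

theorem SG_add_sub_sub_eq_sum (q q' : MvPolynomial (Fin 3) R) :
    SG (q + q') - SG q - SG q' = ∑ t ∈ q.support, ∑ s ∈ q'.support, C (coeff t q * coeff s q') *
      (SG (monomial t 1 + monomial s 1) - SG (monomial t 1) - SG (monomial s 1)) := by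
  simp only [SG_add_sub_sub, binCoeff_gsub_eq_sum q, binCoeff_gsub_eq_sum q', sum_mul, mul_sum]
  conv_lhs => rw [sum_comm]; arg 2; ext s; rw [sum_comm]
  conv_lhs => rw [sum_comm]
  refine sum_congr rfl fun t _ => sum_congr rfl fun s _ => sum_congr rfl fun i _ => ?_
  rw [map_mul]
  ring

theorem gsub_monomial (t : Fin 3 →₀ ℕ) :
    gsub (monomial t (1 : R)) = ∑ k ∈ range (t 0 + 1),
      C (C ((-1) ^ t 0 * ((t 0).choose k : R)) * X 0 ^ (t 1 + t 2) * X 1 ^ k * X 2 ^ (t 0 - k)) *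
        X 0 ^ (k + t 1) * X 1 ^ (t 0 - k + t 2) := by
  have hline : (C (-X 1) * X 0 - C (X 2) * X 1 : MvPolynomial (Fin 2) (MvPolynomial (Fin 3) R)) =
      C (C (-1)) * (C (X 1) * X 0 + C (X 2) * X 1) := by
    simp only [map_neg, map_one]
    ring
  rw [monomial_fin_three, C_1, one_mul, gsub]
  simp only [map_mul, map_pow, aeval_X, Matrix.cons_val_zero, Matrix.cons_val_one,
    Matrix.cons_val_two, Matrix.head_cons, Matrix.tail_cons]
  rw [hline, mul_pow, add_pow, mul_sum, sum_mul, sum_mul]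
  refine sum_congr rfl fun k _ => ?_
  simp only [map_neg, map_one, map_natCast]
  ring

/- The coefficient vanishes unless `t 2 ≤ i` and `t 1 + i ≤ 4` (the binomial coefficient is `0`
when `t 2 > i`), so the truncated subtractions in the exponent never matter. -/
def gsubMonomialExp (t : Fin 3 → ℕ) (i : Fin 5) : Fin 3 → ℕ := ![t 1 + t 2, 4 - i - t 1, i - t 2]

def gsubMonomialCoeff (t : Fin 3 → ℕ) (i : Fin 5) : ℤ :=
  if t 1 + i ≤ 4 then (-1) ^ t 0 * (t 0).choose (4 - i - t 1) else 0

theorem binCoeff_gsub_monomial (t : Fin 3 →₀ ℕ) (ht : t 0 + t 1 + t 2 = 4) (i : Fin 5) :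
    binCoeff (gsub (monomial t (1 : R))) i = monomial
      (Finsupp.equivFunOnFinite.symm (gsubMonomialExp t i)) (gsubMonomialCoeff t i : R) := by
  have hi := i.is_le
  rw [gsub_monomial, binCoeff, coeff_sum, monomial_fin_three]
  simp only [coeff_C_mul_X_pow_mul_X_pow, gsubMonomialExp, gsubMonomialCoeff,
    Finsupp.coe_equivFunOnFinite_symm]
  rw [sum_eq_single (4 - i - t 1)]
  · split_ifs <;> try omega
    · simp [Matrix.cons_val, show t 0 - (4 - i - t 1) = i - t 2 by omega]
    · rw [Nat.choose_eq_zero_of_lt (by omega)]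
      simp
    · simp
  · intro k hk hne
    rw [if_neg (by simp only [mem_range] at hk; omega)]
  · intro hk
    rw [Nat.choose_eq_zero_of_lt (by simp only [mem_range] at hk; omega)]
    simp

def polarSGCoeff (t s m : Fin 3 → ℕ) : ℤ :=
  ∑ i : Fin 5, sinvPolarWeight i *
    if gsubMonomialExp t i + gsubMonomialExp s i.rev = ![4, 0, 0] + m then
      gsubMonomialCoeff t i * gsubMonomialCoeff s i.rev
    else 0

theorem coeff_SG_monomial_add_sub_sub {t s : Fin 3 →₀ ℕ} (ht : ∑ j, t j = 4)
    (hs : ∑ j, s j = 4) (m : Fin 3 →₀ ℕ) :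
    coeff (Finsupp.single 0 4 + m)
        (SG (monomial t 1 + monomial s 1) - SG (monomial t 1) - SG (monomial s (1 : R))) =
      (polarSGCoeff t s m : R) := by
  rw [Fin.sum_univ_three] at ht hs
  rw [SG_add_sub_sub, coeff_sum, polarSGCoeff, Int.cast_sum]
  refine sum_congr rfl fun i _ => ?_
  rw [binCoeff_gsub_monomial t ht, binCoeff_gsub_monomial s hs,
    ← map_intCast (C : R →+* MvPolynomial (Fin 3) R), mul_assoc, coeff_C_mul, monomial_mul,
    coeff_monomial]
  simp only [equivFunOnFinite_symm_add_eq_single_add_iff]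
  push_cast
  rfl

theorem coeff_SG_add_sub_sub {q q' : MvPolynomial (Fin 3) R} (hq : q.IsHomogeneous 4)
    (hq' : q'.IsHomogeneous 4) (m : Fin 3 →₀ ℕ) :
    coeff (Finsupp.single 0 4 + m) (SG (q + q') - SG q - SG q') =
      ∑ t ∈ q.support, ∑ s ∈ q'.support, coeff t q * coeff s q' * (polarSGCoeff t s m : R) := by
  rw [SG_add_sub_sub_eq_sum, coeff_sum]
  refine sum_congr rfl fun t ht => ?_
  rw [coeff_sum]
  refine sum_congr rfl fun s hs => ?_
  rw [coeff_C_mul, coeff_SG_monomial_add_sub_sub (hq.sum_eq_of_mem_support ht)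
    (hq'.sum_eq_of_mem_support hs)]

def harmonicTrilinear (H : MvPolynomial (Fin 3) R → MvPolynomial (Fin 3) R)
    (q₁ q₂ q₃ : MvPolynomial (Fin 3) R) : R :=
  pairQ q₁ (H (q₂ + q₃) - H q₂ - H q₃)

def harmonicTrilinearCoeff (m t s : Fin 3 → ℕ) : ℤ :=
  ((m 0).factorial * (m 1).factorial * (m 2).factorial / 2 : ℕ) * polarSGCoeff t s m

theorem harmonicTrilinear_eq_sum {H : MvPolynomial (Fin 3) R → MvPolynomial (Fin 3) R}
    (hH : ∀ p : MvPolynomial (Fin 3) R, p.IsHomogeneous 4 → X 0 ^ 4 * H p = SG p)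
    (q₁ : MvPolynomial (Fin 3) R) {q₂ q₃ : MvPolynomial (Fin 3) R} (h₂ : q₂.IsHomogeneous 4)
    (h₃ : q₃.IsHomogeneous 4) :
    harmonicTrilinear H q₁ q₂ q₃ = ∑ m ∈ q₁.support, ∑ t ∈ q₂.support, ∑ s ∈ q₃.support,
      coeff m q₁ * coeff t q₂ * coeff s q₃ * (harmonicTrilinearCoeff m t s : R) := by
  have hcoeff (m : Fin 3 →₀ ℕ) : coeff m (H (q₂ + q₃) - H q₂ - H q₃) =
      coeff (Finsupp.single 0 4 + m) (SG (q₂ + q₃) - SG q₂ - SG q₃) := by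
    rw [← hH _ (h₂.add h₃), ← hH _ h₂, ← hH _ h₃, ← mul_sub, ← mul_sub, X_pow_eq_monomial,
      coeff_monomial_mul, one_mul]
  rw [harmonicTrilinear, pairQ]
  refine sum_congr rfl fun m _ => ?_
  rw [hcoeff, coeff_SG_add_sub_sub h₂ h₃, mul_sum]
  refine sum_congr rfl fun t _ => ?_
  rw [mul_sum]
  refine sum_congr rfl fun s _ => ?_
  rw [harmonicTrilinearCoeff, Int.cast_mul, Int.cast_natCast]
  ring

theorem harmonicTrilinearCoeff_comm :
    ∀ m ∈ Finset.Nat.antidiagonalTuple 3 4, ∀ t ∈ Finset.Nat.antidiagonalTuple 3 4,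
      ∀ s ∈ Finset.Nat.antidiagonalTuple 3 4,
        harmonicTrilinearCoeff m t s = harmonicTrilinearCoeff t m s := by
  decide

theorem harmonicTrilinear_comm₁₂ {H : MvPolynomial (Fin 3) R → MvPolynomial (Fin 3) R}
    (hH : ∀ p : MvPolynomial (Fin 3) R, p.IsHomogeneous 4 → X 0 ^ 4 * H p = SG p)
    {q₁ q₂ q₃ : MvPolynomial (Fin 3) R} (h₁ : q₁.IsHomogeneous 4) (h₂ : q₂.IsHomogeneous 4)
    (h₃ : q₃.IsHomogeneous 4) :
    harmonicTrilinear H q₁ q₂ q₃ = harmonicTrilinear H q₂ q₁ q₃ := by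
  have hmem {q : MvPolynomial (Fin 3) R} (hq : q.IsHomogeneous 4) {d : Fin 3 →₀ ℕ}
      (hd : d ∈ q.support) : ⇑d ∈ Finset.Nat.antidiagonalTuple 3 4 :=
    Finset.Nat.mem_antidiagonalTuple.mpr (hq.sum_eq_of_mem_support hd)
  rw [harmonicTrilinear_eq_sum hH q₁ h₂ h₃, harmonicTrilinear_eq_sum hH q₂ h₁ h₃, sum_comm]
  refine sum_congr rfl fun t ht => sum_congr rfl fun m hm => sum_congr rfl fun s hs => ?_
  rw [harmonicTrilinearCoeff_comm _ (hmem h₁ hm) _ (hmem h₂ ht) _ (hmem h₃ hs)]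
  ring

theorem harmonicTrilinear_comm₂₃ (H : MvPolynomial (Fin 3) R → MvPolynomial (Fin 3) R)
    (q₁ q₂ q₃ : MvPolynomial (Fin 3) R) :
    harmonicTrilinear H q₁ q₂ q₃ = harmonicTrilinear H q₁ q₃ q₂ := by
  rw [harmonicTrilinear, harmonicTrilinear, add_comm, sub_right_comm]

end HarmonicQuartic

/-- Let `H` be the harmonic-quartic operation on ternary quartic forms,
characterized by `u⁴ · H(q) = S(q(-vy-wz, uy, uz))`.  The trilinear form
`t(q₁,q₂,q₃) = ⟨q₁, H(q₂+q₃) − H(q₂) − H(q₃)⟩` is symmetric in its three arguments. -/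
theorem stmt2 {R : Type*} [CommRing R]
    (H : MvPolynomial (Fin 3) R → MvPolynomial (Fin 3) R)
    (hH : ∀ p : MvPolynomial (Fin 3) R, p.IsHomogeneous 4 → X 0 ^ 4 * H p = SG p)
    (Q : Fin 3 → MvPolynomial (Fin 3) R) (hQ : ∀ i, (Q i).IsHomogeneous 4)
    (σ : Equiv.Perm (Fin 3)) :
    pairQ (Q 0) (H (Q 1 + Q 2) - H (Q 1) - H (Q 2)) =
      pairQ (Q (σ 0)) (H (Q (σ 1) + Q (σ 2)) - H (Q (σ 1)) - H (Q (σ 2))) := by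
  let F (τ : Equiv.Perm (Fin 3)) : R := harmonicTrilinear H (Q (τ 0)) (Q (τ 1)) (Q (τ 2))
  have hF (τ : Equiv.Perm (Fin 3)) (i : Fin 2) : F (τ * Equiv.swap i.castSucc i.succ) = F τ := by
    fin_cases i
    · exact (harmonicTrilinear_comm₁₂ hH (hQ _) (hQ _) (hQ _)).symm
    · exact (harmonicTrilinear_comm₂₃ H _ _ _).symm
  exact (Equiv.Perm.apply_eq_apply_one_of_mul_swap F hF σ).symm
end
end

section
/- Let R be a commutative ring and let q(x,y,z) = x·q₃(y,z) + q₄(y,z) be a ternary quartic form, where q₃ and q₄ are binary forms in y,z of degrees 3 and 4 respectively (equivalently, the point [1,0,0] is a point of multiplicity at least 3 of the quartic {q = 0}). Then u² divides H(q) in R[u,v,w]. -/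
open MvPolynomial

noncomputable section

lemma aeval_mul_left_homog {R S σ : Type*} [CommRing R] [CommRing S] [Algebra R S]
    {p : MvPolynomial σ R} {n : ℕ} (hp : p.IsHomogeneous n) (c : S) (w : σ → S) :
    aeval (fun i => c * w i) p = c ^ n * aeval w p := by
  rw [p.as_sum, map_sum, map_sum, Finset.mul_sum]
  refine Finset.sum_congr rfl fun m hm => ?_
  rw [aeval_monomial, aeval_monomial, Finsupp.prod, Finsupp.prod]
  simp only [mul_pow]
  rw [Finset.prod_mul_distrib, Finset.prod_pow_eq_pow_sum]
  have : (∑ i ∈ m.support, m i) = n := by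
    have := hp (mem_support_iff.mp hm)
    simpa [Finsupp.weight_apply, Finsupp.sum] using this
  rw [this]; ring

lemma gsub_mult3 {R : Type*} [CommRing R]
    (q3 q4 : MvPolynomial (Fin 2) R)
    (h3 : q3.IsHomogeneous 3) (h4 : q4.IsHomogeneous 4) :
    gsub (X 0 * rename Fin.succ q3 + rename Fin.succ q4)
      = C ((X 0 : MvPolynomial (Fin 3) R) ^ 3) *
        ((C (- X 1) * X 0 - C (X 2) * X 1) * aeval X q3 + C (X 0) * aeval X q4) := by
  unfold gsub
  rw [map_add, map_mul, aeval_rename, aeval_rename]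
  have hcomp : ((![(C (- X 1) * X 0 - C (X 2) * X 1 :
        MvPolynomial (Fin 2) (MvPolynomial (Fin 3) R)),
       C (X 0) * X 0, C (X 0) * X 1]) ∘ Fin.succ)
      = fun i : Fin 2 => C (X 0 : MvPolynomial (Fin 3) R) * X i := by
    funext i; fin_cases i <;> rfl
  rw [hcomp, aeval_mul_left_homog h3, aeval_mul_left_homog h4, aeval_X]
  simp only [Matrix.cons_val_zero, map_pow]
  ring

/-- If `q = x·q₃(y,z) + q₄(y,z)` (so `[1,0,0]` is a point of multiplicity at
least `3` of `{q = 0}`), then `u²` divides the harmonic quartic `H(q)`. -/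
theorem stmt13 {R : Type*} [CommRing R]
    (q3 q4 : MvPolynomial (Fin 2) R)
    (h3 : q3.IsHomogeneous 3) (h4 : q4.IsHomogeneous 4)
    (H : MvPolynomial (Fin 3) R)
    (hH : X 0 ^ 4 * H =
      SG (X 0 * rename Fin.succ q3 + rename Fin.succ q4)) :
    X 0 ^ 2 ∣ H := by
  set G : MvPolynomial (Fin 2) (MvPolynomial (Fin 3) R) :=
    (C (- X 1) * X 0 - C (X 2) * X 1) * aeval X q3 + C (X 0) * aeval X q4 with hG
  have key : gsub (X 0 * rename Fin.succ q3 + rename Fin.succ q4)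
      = C ((X 0 : MvPolynomial (Fin 3) R) ^ 3) * G := gsub_mult3 q3 q4 h3 h4
  have hf : ∀ i : Fin 5,
      binCoeff (gsub (X 0 * rename Fin.succ q3 + rename Fin.succ q4)) i
        = X 0 ^ 3 * binCoeff G i := by
    intro i
    unfold binCoeff
    rw [key, coeff_C_mul]
  set E : MvPolynomial (Fin 3) R :=
    12 * binCoeff G 0 * binCoeff G 4 - 3 * binCoeff G 1 * binCoeff G 3
      + (binCoeff G 2) ^ 2 with hE
  have hSG : SG (X 0 * rename Fin.succ q3 + rename Fin.succ q4) = X 0 ^ 6 * E := by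
    unfold SG Sinv
    beta_reduce
    rw [hf 0, hf 1, hf 2, hf 3, hf 4, hE]
    ring
  refine ⟨E, (isRegular_X_pow (n := (0 : Fin 3)) 4).left ?_⟩
  show X 0 ^ 4 * H = X 0 ^ 4 * (X 0 ^ 2 * E)
  rw [hH, hSG]
  ring
end
end

section
/- Let k be an algebraically closed field of characteristic coprime to 6, let ε ∈ k with ε⁴ = 1, let a, b ∈ k, let ℓ be the line z = ax + by in P²_k, and let p be a point of ℓ. Suppose (λ,μ,ν) and (λ′,μ′,ν′) are triples in k³ such that each of the quartics with equations q_ε + xyz(λx+μy+νz) = 0 and q_ε + xyz(λ′x+μ′y+ν′z) = 0 meets ℓ only at the point p; that is, for each of the two forms, the binary quartic obtained by substituting z = ax + by is a nonzero scalar multiple of the fourth power of the linear form in x,y cutting out p on ℓ. Then the 3×3 matrix M with rows (a, 0, a²), (b, a, 2ab), (0, b, b²) satisfies M·(λ−λ′, μ−μ′, ν−ν′)ᵗ = 0. (Equivalently, M·(λ,μ,ν)ᵗ is a vector of constants depending only on a, b and p.) -/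
open MvPolynomial

noncomputable section

set_option maxHeartbeats 2000000 in
/-- If two quartics `q_ε + xyz(λx+μy+νz)` and `q_ε + xyz(λ'x+μ'y+ν'z)` each
meet the line `z = ax + by` only at the same point `p` (with parameter `(s,t)` on the line,
i.e. the restrictions are nonzero multiples of `(t·y − s·z)⁴`), then the matrix with rows
`(a,0,a²), (b,a,2ab), (0,b,b²)` kills the vector `(λ−λ', μ−μ', ν−ν')`. -/
theorem stmt16 {k : Type*} [Field k] [IsAlgClosed k] (h6 : (6 : k) ≠ 0)
    (ε : k) (hε : ε ^ 4 = 1) (a b s t : k) (hst : (s, t) ≠ (0, 0))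
    (lam mu nu lam' mu' nu' : k)
    (h1 : ∃ c : k, c ≠ 0 ∧
      restrictLine (qeps ε + X 0 * X 1 * X 2 * (C lam * X 0 + C mu * X 1 + C nu * X 2))
          ![1, 0, a] ![0, 1, b] =
        C c * (C t * X 0 - C s * X 1) ^ 4)
    (h2 : ∃ c : k, c ≠ 0 ∧
      restrictLine (qeps ε + X 0 * X 1 * X 2 * (C lam' * X 0 + C mu' * X 1 + C nu' * X 2))
          ![1, 0, a] ![0, 1, b] =
        C c * (C t * X 0 - C s * X 1) ^ 4) :
    Matrix.mulVec !![a, 0, a ^ 2; b, a, 2 * a * b; 0, b, b ^ 2]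
      ![lam - lam', mu - mu', nu - nu'] = 0 := by
  obtain ⟨c1, hc1, h1⟩ := h1
  obtain ⟨c2, hc2, h2⟩ := h2
  simp only [restrictLine, qeps, map_add, map_sub, map_mul, map_pow, aeval_X, aeval_C,
    MvPolynomial.algebraMap_eq,
    Matrix.cons_val_zero, Matrix.cons_val_one, Matrix.head_cons,
    Matrix.cons_val_two, Matrix.tail_cons, map_one, map_zero, zero_mul, one_mul,
    zero_add, add_zero] at h1 h2
  have H1 := congrArg (aeval ![(Polynomial.X : Polynomial k), 1]) h1
  have H2 := congrArg (aeval ![(Polynomial.X : Polynomial k), 1]) h2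
  simp only [map_add, map_sub, map_mul, map_pow, aeval_X, aeval_C, Polynomial.algebraMap_eq,
    Matrix.cons_val_zero, Matrix.cons_val_one, Matrix.head_cons, map_one] at H1 H2
  have K : (Polynomial.C ((c2 - c1) * t ^ 4)) * Polynomial.X ^ 4
      + (Polynomial.C (a * (lam - lam' + a * (nu - nu')) + 4 * (c1 - c2) * t ^ 3 * s))
          * Polynomial.X ^ 3
      + (Polynomial.C (a * (mu - mu' + b * (nu - nu')) + b * (lam - lam' + a * (nu - nu'))
          - 6 * (c1 - c2) * t ^ 2 * s ^ 2)) * Polynomial.X ^ 2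
      + (Polynomial.C (b * (mu - mu' + b * (nu - nu')) + 4 * (c1 - c2) * t * s ^ 3))
          * Polynomial.X ^ 1
      + (Polynomial.C ((c2 - c1) * s ^ 4)) * Polynomial.X ^ 0 = 0 := by
    simp only [map_mul, map_add, map_sub, map_pow, map_ofNat, map_one]
    linear_combination H1 - H2
  have coeffK : ∀ n : ℕ, Polynomial.coeff ((Polynomial.C ((c2 - c1) * t ^ 4)) * Polynomial.X ^ 4
      + (Polynomial.C (a * (lam - lam' + a * (nu - nu')) + 4 * (c1 - c2) * t ^ 3 * s))
          * Polynomial.X ^ 3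
      + (Polynomial.C (a * (mu - mu' + b * (nu - nu')) + b * (lam - lam' + a * (nu - nu'))
          - 6 * (c1 - c2) * t ^ 2 * s ^ 2)) * Polynomial.X ^ 2
      + (Polynomial.C (b * (mu - mu' + b * (nu - nu')) + 4 * (c1 - c2) * t * s ^ 3))
          * Polynomial.X ^ 1
      + (Polynomial.C ((c2 - c1) * s ^ 4)) * Polynomial.X ^ 0) n = 0 := by
    intro n; rw [K]; simp
  have E4 := coeffK 4
  have E3 := coeffK 3
  have E2 := coeffK 2
  have E1 := coeffK 1
  have E0 := coeffK 0
  simp only [Polynomial.coeff_add, Polynomial.coeff_C_mul, Polynomial.coeff_X_pow] at E4 E3 E2 E1 E0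
  norm_num at E4 E3 E2 E1 E0
  have hcc : c1 - c2 = 0 := by
    rcases eq_or_ne s 0 with hs | hs
    · have ht : t ≠ 0 := fun ht => hst (by simp [hs, ht])
      rcases E4 with h | h
      · linear_combination -h
      · exact absurd h ht
    · rcases E0 with h | h
      · linear_combination -h
      · exact absurd h hs
  funext i
  fin_cases i <;>
    simp [Matrix.mulVec, dotProduct, Fin.sum_univ_three]
  · linear_combination E3 - 4 * t ^ 3 * s * hcc
  · linear_combination E2 + 6 * t ^ 2 * s ^ 2 * hcc
  · linear_combination E1 - 4 * t * s ^ 3 * hcc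
end
end
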